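/- The Fibonacci-based Huffman sequence is canonically delta-correlated: for even M ≥ 2, N = 2M+3, and real s ≠ 0, the aperiodic auto-correlation A_d(s) = ∑_i H_i^N(s)·H_{i+d}^N(s) of H^N(s) satisfies A_0(s) = 2 + s²·F_{M+1}(s)² + 4·F_M(s)·F_{M+2}(s), A_{N−1}(s) = A_{−(N−1)}(s) = −1, and A_d(s) = 0 for all shifts d with 0 < |d| < N−1. -/

import Mathlib

/-!
Let `h = ∑ Hᵢ Tⁱ` be the generating Laurent polynomial of the sequence, so that the aperiodic
autocorrelations are the coefficients of `h(T⁻¹) h(T)`. The filter `p = 1 - s T - T²`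
annihilates the two Fibonacci stretches of the sequence, and what survives factors as
`p h = T³ p(T⁻¹) r` with `r = T^(2M+2) + u T^(M+1) - 1` and `u = s F_{M+1} + 2 F_M`
(this uses `F_{-M} = -F_M` and `F_{-M-1} = F_{M+1}` for even `M`). Since `T³ p(T⁻¹) / p` is
all-pass, `h(T⁻¹) h(T) = r(T⁻¹) r(T) = 2 + u² - T^(2M+2) - T^(-(2M+2))`, and
`u² = s² F_{M+1}² + 4 F_M F_{M+2}` by the recurrence.
-/

open LaurentPolynomial Finset

theorem Finset.sum_Icc_add_sum_Icc {M : Type*} [AddCommMonoid M] (f : ℤ → M) {a b c : ℤ}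
    (hab : a ≤ b + 1) (hbc : b ≤ c) :
    ∑ i ∈ Icc a b, f i + ∑ i ∈ Icc (b + 1) c, f i = ∑ i ∈ Icc a c, f i := by
  rw [← sum_union (disjoint_left.2 fun i hi hi' => by simp only [mem_Icc] at hi hi'; omega)]
  congr 1
  ext i
  simp only [mem_union, mem_Icc]
  omega

namespace LaurentPolynomial

variable {R : Type*}

/-- With `T_add`, this rewrites monomials into products of powers of `T 1` and of `T m` for
symbolic `m`, a form in which `ring` can compare them. (Not `simp`: it loops with `T_pow`.) -/
theorem T_ofNat [Semiring R] (n : ℕ) [n.AtLeastTwo] :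
    (T (no_index (OfNat.ofNat n : ℤ)) : R[T;T⁻¹]) = T 1 ^ (OfNat.ofNat n : ℕ) := by
  rw [T_pow, mul_one]
  rfl

theorem coeff_C_mul_T [Semiring R] (a : R) (n m : ℤ) :
    (C a * T n).coeff m = if n = m then a else 0 := by
  rw [← single_eq_C_mul_T, AddMonoidAlgebra.coeff_single, Finsupp.single_apply]

theorem coeff_invert_mul_self [CommSemiring R] (S : Finset ℤ) (f : ℤ → R)
    (hf : ∀ i ∉ S, f i = 0) (d : ℤ) :
    (invert (∑ i ∈ S, C (f i) * T i) * ∑ i ∈ S, C (f i) * T i).coeff d =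
      ∑ i ∈ S, f i * f (i + d) := by
  simp only [map_sum, map_mul, invert_C, invert_T, sum_mul_sum, AddMonoidAlgebra.coeff_sum,
    Finsupp.finsetSum_apply]
  refine sum_congr rfl fun i _ => ?_
  have hterm : ∀ j, C (f i) * T (-i) * (C (f j) * T j) = C (f i * f j) * T (-i + j) := by
    intro j
    rw [T_add, map_mul]
    ring
  simp only [hterm, coeff_C_mul_T, neg_add_eq_iff_eq_add]
  rw [sum_ite_eq']
  split_ifs with hd
  · rfl
  · rw [hf _ hd, mul_zero]

theorem invert_mul_self_eq_of_mul_eq [CommRing R] [IsDomain R] {p h r : R[T;T⁻¹]} (n : ℤ)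
    (hp : p ≠ 0) (hph : p * h = T n * invert p * r) :
    invert h * h = invert r * r := by
  have hinv : invert p * invert h = T (-n) * p * invert r := by
    simpa [involutive_invert _] using congrArg invert hph
  have hTn : T (-n) * T n = (1 : R[T;T⁻¹]) := by rw [← T_add, neg_add_cancel, T_zero]
  refine mul_left_cancel₀ (mul_ne_zero (by simpa using hp) hp : invert p * p ≠ 0) ?_
  calc invert p * p * (invert h * h) = (invert p * invert h) * (p * h) := by ring
    _ = T (-n) * T n * (invert p * p) * (invert r * r) := by rw [hinv, hph]; ring
    _ = invert p * p * (invert r * r) := by rw [hTn, one_mul]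

theorem invert_mul_self_T_two_mul [CommRing R] (u : R) (m : ℤ) :
    invert (T (2 * m) + C u * T m - 1) * (T (2 * m) + C u * T m - 1) =
      C (2 + u ^ 2) - T (2 * m) - T (-(2 * m)) := by
  have hm : T (-m) * T m = (1 : R[T;T⁻¹]) := by rw [← T_add, neg_add_cancel, T_zero]
  simp only [map_sub, map_add, map_one, map_mul, map_pow, map_ofNat, invert_C, invert_T,
    two_mul, neg_add, T_add]
  linear_combination (T (-m) * T m + 1 + C u * T (-m) + C u * T m + C u ^ 2) * hm

variable [CommRing R]

/-- Multiplication by `fibFilter s` maps a sequence `x` to `x n - s * x (n - 1) - x (n - 2)`. -/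
noncomputable def fibFilter (s : R) : R[T;T⁻¹] := 1 - C s * T 1 - T 2

theorem fibFilter_ne_zero [Nontrivial R] (s : R) : fibFilter s ≠ 0 := by
  intro h
  have := congrArg (fun p : R[T;T⁻¹] => p.coeff 0) h
  simp [fibFilter, coeff_C_mul_T] at this

theorem T_three_mul_invert_fibFilter (s : R) :
    T 3 * invert (fibFilter s) = T 3 - C s * T 2 - T 1 := by
  simp only [fibFilter, map_sub, map_one, map_mul, invert_C, invert_T, mul_sub, mul_one]
  rw [mul_left_comm, ← T_add, ← T_add]
  norm_num

end LaurentPolynomial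

section Recurrence

variable {R : Type*} [CommRing R] {s : R} {F : ℤ → R}

theorem fib_neg_of_even (h0 : F 0 = 0) (hrec : ∀ n, F (n + 2) = s * F (n + 1) + F n) {n : ℤ}
    (hn : Even n) : F (-n) = -F n ∧ F (-n - 1) = F (n + 1) := by
  obtain ⟨k, rfl⟩ := hn
  induction k using Int.induction_on with
  | zero =>
    have := hrec (-1)
    norm_num at this ⊢
    exact ⟨by linear_combination 2 * h0, by linear_combination -this - s * h0⟩
  | succ k ih =>
    obtain ⟨ih0, ih1⟩ := ih
    constructor
    · linear_combination (norm := ring_nf) ih0 - s * ih1 - hrec (-(k + k) - 2) + hrec (k + k)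
    · linear_combination (norm := ring_nf) -hrec (-(k + k) - 3) + s * hrec (-(k + k) - 2)
        - hrec (k + k + 1) - s * hrec (k + k) + (1 + s ^ 2) * ih1 - s * ih0
  | pred k ih =>
    obtain ⟨ih0, ih1⟩ := ih
    constructor
    · linear_combination (norm := ring_nf) hrec (k + k) + s * hrec (k + k - 1)
        - hrec (-(k + k) - 2) + s * hrec (-(k + k) - 1) + (1 + s ^ 2) * ih0 + s * ih1
    · linear_combination (norm := ring_nf) hrec (k + k - 1) + hrec (-(k + k) - 1) + s * ih0 + ih1

theorem fibFilter_mul_sum_Icc (hrec : ∀ n, F (n + 2) = s * F (n + 1) + F n) {a b : ℤ}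
    (hab : a - 1 ≤ b) :
    fibFilter s * ∑ k ∈ Icc a b, C (F k) * T k =
      C (F a) * T a + C (F (a - 1)) * T (a + 1) - C (F (b + 1)) * T (b + 1)
        - C (F b) * T (b + 2) := by
  induction b, hab using Int.leInduction with
  | base =>
    rw [Icc_eq_empty (by omega), sum_empty]
    ring_nf
  | succ b hab ih =>
    rw [← insert_Icc_right_eq_Icc_add_one (by omega), sum_insert (by simp), mul_add, ih]
    have hC := congrArg C (hrec b)
    simp only [fibFilter, map_add, map_mul, T_add, T_ofNat] at hC ⊢
    linear_combination (norm := ring_nf) T b * T 1 ^ 2 * hC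

end Recurrence

section Huffman

variable {R : Type*} [CommRing R]

def huffman (s : R) (F : ℤ → R) (M i : ℤ) : R :=
  if i = 1 then 1
  else if 2 ≤ i ∧ i ≤ M + 1 then 2 * s * F (i - 1)
  else if i = M + 2 then s * F (M + 1) - 2 * F M
  else if M + 3 ≤ i ∧ i ≤ 2 * M + 2 then 2 * s * F (i - (2 * M + 3))
  else if i = 2 * M + 3 then -1
  else 0

variable {s : R} {F : ℤ → R} {M : ℤ}

theorem huffman_eq_zero_of_notMem (hM : 0 ≤ M) {i : ℤ} (hi : i ∉ Icc 1 (2 * M + 3)) :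
    huffman s F M i = 0 := by
  rw [mem_Icc] at hi
  rw [huffman, if_neg (by omega), if_neg (by omega), if_neg (by omega), if_neg (by omega),
    if_neg (by omega)]

theorem sum_Icc_huffman_C_mul_T (hM : 0 ≤ M) :
    ∑ i ∈ Icc 1 (2 * M + 3), C (huffman s F M i) * T i =
      T 1 + ∑ i ∈ Icc 2 (M + 1), C (2 * s * F (i - 1)) * T i
        + C (s * F (M + 1) - 2 * F M) * T (M + 2)
        + ∑ i ∈ Icc (M + 3) (2 * M + 2), C (2 * s * F (i - (2 * M + 3))) * T i
        - T (2 * M + 3) := by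
  rw [← sum_Icc_add_sum_Icc _ (by omega : (1 : ℤ) ≤ 2 * M + 2 + 1) (by omega),
    ← sum_Icc_add_sum_Icc _ (by omega : (1 : ℤ) ≤ M + 2 + 1) (by omega : M + 2 ≤ 2 * M + 2),
    ← sum_Icc_add_sum_Icc _ (by omega : (1 : ℤ) ≤ M + 1 + 1) (by omega : M + 1 ≤ M + 2),
    ← sum_Icc_add_sum_Icc _ (by omega : (1 : ℤ) ≤ 1 + 1) (by omega : 1 ≤ M + 1)]
  rw [show (1 : ℤ) + 1 = 2 by norm_num, show M + 1 + 1 = M + 2 by ring,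
    show M + 2 + 1 = M + 3 by ring, show 2 * M + 2 + 1 = 2 * M + 3 by ring]
  simp only [Icc_self, sum_singleton]
  have first : huffman s F M 1 = 1 := by simp [huffman]
  have middle : huffman s F M (M + 2) = s * F (M + 1) - 2 * F M := by
    rw [huffman, if_neg (by omega), if_neg (by omega), if_pos rfl]
  have last : huffman s F M (2 * M + 3) = -1 := by
    rw [huffman, if_neg (by omega), if_neg (by omega), if_neg (by omega), if_neg (by omega),
      if_pos rfl]
  have left : ∀ i ∈ Icc 2 (M + 1), C (huffman s F M i) * T i = C (2 * s * F (i - 1)) * T i := by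
    intro i hi
    rw [mem_Icc] at hi
    rw [huffman, if_neg (by omega), if_pos hi]
  have right : ∀ i ∈ Icc (M + 3) (2 * M + 2),
      C (huffman s F M i) * T i = C (2 * s * F (i - (2 * M + 3))) * T i := by
    intro i hi
    rw [mem_Icc] at hi
    rw [huffman, if_neg (by omega), if_neg (by omega), if_neg (by omega), if_pos hi]
  rw [first, middle, last, sum_congr rfl left, sum_congr rfl right, map_one, map_neg, map_one]
  ring

theorem fibFilter_mul_sum_Icc_huffman (h0 : F 0 = 0) (h1 : F 1 = 1)
    (hrec : ∀ n, F (n + 2) = s * F (n + 1) + F n) (hM : 0 ≤ M) (hMeven : Even M) :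
    fibFilter s * ∑ i ∈ Icc 1 (2 * M + 3), C (huffman s F M i) * T i =
      (T 3 - C s * T 2 - T 1) *
        (T (2 * (M + 1)) + C (s * F (M + 1) + 2 * F M) * T (M + 1) - 1) := by
  obtain ⟨hnegM, hnegM1⟩ := fib_neg_of_even h0 hrec hMeven
  have hneg1 : F (-1) = 1 := by simpa [h1] using (fib_neg_of_even h0 hrec Even.zero).2
  have hrec_shift : ∀ c n : ℤ,
      2 * s * F (n + 2 - c) = s * (2 * s * F (n + 1 - c)) + 2 * s * F (n - c) := by
    intro c n
    linear_combination (norm := ring_nf) 2 * s * hrec (n - c)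
  rw [sum_Icc_huffman_C_mul_T hM, mul_sub, mul_add, mul_add, mul_add,
    fibFilter_mul_sum_Icc (F := fun i => 2 * s * F (i - 1)) (hrec_shift 1) (by omega),
    fibFilter_mul_sum_Icc (F := fun i => 2 * s * F (i - (2 * M + 3))) (hrec_shift _) (by omega)]
  simp only [show (2 : ℤ) - 1 = 1 by norm_num, show (1 : ℤ) - 1 = 0 by norm_num,
    show M + 1 + 1 - 1 = M + 1 by ring, show M + 1 - 1 = M by ring,
    show M + 3 - (2 * M + 3) = -M by ring, show M + 3 - 1 - (2 * M + 3) = -M - 1 by ring,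
    show 2 * M + 2 + 1 - (2 * M + 3) = 0 by ring, show 2 * M + 2 - (2 * M + 3) = -1 by ring,
    h0, h1, hneg1, hnegM, hnegM1]
  simp only [fibFilter, map_sub, map_add, map_mul, map_neg, map_one, map_zero, two_mul, T_add,
    T_ofNat]
  ring

end Huffman

theorem huffman_canonical_delta_correlation_general (s : ℝ) (F : ℤ → ℝ)
    (h0 : F 0 = 0) (h1 : F 1 = 1)
    (hrec : ∀ n : ℤ, F (n + 2) = s * F (n + 1) + F n)
    (M : ℤ) (hM2 : 2 ≤ M) (hMeven : Even M)
    (H : ℤ → ℝ)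
    (hH : ∀ i : ℤ, H i =
      if i = 1 then 1
      else if 2 ≤ i ∧ i ≤ M + 1 then 2 * s * F (i - 1)
      else if i = M + 2 then s * F (M + 1) - 2 * F M
      else if M + 3 ≤ i ∧ i ≤ 2 * M + 2 then 2 * s * F (i - (2 * M + 3))
      else if i = 2 * M + 3 then -1
      else 0)
    (A : ℤ → ℝ)
    (hA : ∀ d : ℤ, A d = ∑ i ∈ Finset.Icc (1 : ℤ) (2 * M + 3), H i * H (i + d)) :
    A 0 = 2 + s ^ 2 * (F (M + 1)) ^ 2 + 4 * F M * F (M + 2) ∧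
      A (2 * M + 2) = -1 ∧ A (-(2 * M + 2)) = -1 ∧
      ∀ d : ℤ, 0 < |d| → |d| < 2 * M + 2 → A d = 0 := by
  obtain rfl : H = huffman s F M := funext hH
  have hcorr : ∀ d, A d = (C (2 + (s * F (M + 1) + 2 * F M) ^ 2) - T (2 * (M + 1))
      - T (-(2 * (M + 1))) : ℝ[T;T⁻¹]).coeff d := by
    intro d
    rw [hA, ← coeff_invert_mul_self _ _ (fun i hi => huffman_eq_zero_of_notMem (by omega) hi),
      invert_mul_self_eq_of_mul_eq 3 (fibFilter_ne_zero s) (by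
        rw [T_three_mul_invert_fibFilter,
          fibFilter_mul_sum_Icc_huffman h0 h1 hrec (by omega) hMeven]),
      invert_mul_self_T_two_mul]
  simp only [hcorr, AddMonoidAlgebra.coeff_sub, Finsupp.sub_apply, C_apply, T_apply]
  refine ⟨?_, ?_, ?_, fun d hd0 hdN => ?_⟩
  · rw [if_pos trivial, if_neg (by omega), if_neg (by omega)]
    linear_combination (-4 * F M) * hrec M
  · rw [if_neg (by omega), if_pos (by ring), if_neg (by omega)]
    ring
  · rw [if_neg (by omega), if_neg (by omega), if_pos (by ring)]
    ring
  · rw [abs_pos] at hd0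
    have := abs_lt.mp hdN
    rw [if_neg hd0, if_neg (by omega), if_neg (by omega)]
    ring

theorem huffman_canonical_delta_correlation (s : ℝ) (hs : s ≠ 0) (F : ℤ → ℝ)
    (h0 : F 0 = 0) (h1 : F 1 = 1)
    (hrec : ∀ n : ℤ, F (n + 2) = s * F (n + 1) + F n)
    (M : ℤ) (hM2 : 2 ≤ M) (hMeven : Even M)
    (H : ℤ → ℝ)
    (hH : ∀ i : ℤ, H i =
      if i = 1 then 1
      else if 2 ≤ i ∧ i ≤ M + 1 then 2 * s * F (i - 1)
      else if i = M + 2 then s * F (M + 1) - 2 * F M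
      else if M + 3 ≤ i ∧ i ≤ 2 * M + 2 then 2 * s * F (i - (2 * M + 3))
      else if i = 2 * M + 3 then -1
      else 0)
    (A : ℤ → ℝ)
    (hA : ∀ d : ℤ, A d = ∑ i ∈ Finset.Icc (1 : ℤ) (2 * M + 3), H i * H (i + d)) :
    A 0 = 2 + s ^ 2 * (F (M + 1)) ^ 2 + 4 * F M * F (M + 2) ∧
      A (2 * M + 2) = -1 ∧ A (-(2 * M + 2)) = -1 ∧
      ∀ d : ℤ, 0 < |d| → |d| < 2 * M + 2 → A d = 0 :=
  huffman_canonical_delta_correlation_general s F h0 h1 hrec M hM2 hMeven H hH A hA
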